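/- arXiv:1702.02547 — 7 statements merged into one kernel-verified Lean document; each statement's English description precedes it below -/
import Mathlib

section
/- If π is a uniformly random permutation of [n] conditioned on π(x) = y, and z is drawn uniformly from [n] independently, then (y z) ∘ π is uniformly distributed over all of S_n. -/
/-!
The map `(π, z) ↦ (y z) ∘ π` is a bijection from `{π | π x = y} × [n]` onto `S_n`: applying the
image to `x` gives back `z`, and then `π` is determined; the inverse is
`σ ↦ ((y σ(x)) ∘ σ, σ(x))`. A bijection pushes a uniform distribution forward to a uniform one.
-/

open Equiv (Perm swap)
open Finset

theorem PMF.map_uniformOfFinset_of_bijOn {α β : Type*} {s : Finset α} {t : Finset β}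
    {f : α → β} (hf : Set.BijOn f s t) (hs : s.Nonempty) (ht : t.Nonempty) :
    (uniformOfFinset s hs).map f = uniformOfFinset t ht := by
  ext b
  rw [map_apply, uniformOfFinset_apply]
  split_ifs with hb
  · obtain ⟨a, ha, rfl⟩ := hf.surjOn hb
    rw [tsum_eq_single a, if_pos rfl, uniformOfFinset_apply_of_mem hs ha,
      card_nbij f hf.mapsTo hf.injOn hf.surjOn]
    intro a' ha'
    split_ifs with hfa
    · exact uniformOfFinset_apply_of_notMem _ fun ha's => ha' (hf.injOn ha's ha hfa.symm)
    · rfl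
  · refine ENNReal.tsum_eq_zero.2 fun a => ?_
    split_ifs with hfa
    · exact uniformOfFinset_apply_of_notMem _ fun ha => hb (hfa ▸ hf.mapsTo ha)
    · rfl

theorem Equiv.Perm.bijOn_swap_mul {α : Type*} [DecidableEq α] (x y : α) :
    Set.BijOn (fun p : Perm α × α => swap y p.2 * p.1) ({π | π x = y} ×ˢ .univ) .univ := by
  refine ⟨Set.mapsTo_univ _ _, ?_, fun σ _ => ⟨(swap y (σ x) * σ, σ x), ?_, ?_⟩⟩
  · rintro ⟨π, z⟩ ⟨hπ, -⟩ ⟨π', z'⟩ ⟨hπ', -⟩ h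
    have hz : z = z' := by
      simpa [hπ.out, hπ'.out] using congrArg (fun σ : Perm α => σ x) h
    subst hz
    exact Prod.ext (mul_left_cancel h) rfl
  · simp [Perm.mul_apply]
  · simp [← mul_assoc]

/-- If π is uniform over permutations with π(x) = y, and z is uniform on [n]
independently, then (y z) ∘ π is uniform over all of S_n. -/
theorem stmt1 (n : ℕ) (x y : Fin n)
    (hS : (Finset.univ.filter fun π : Equiv.Perm (Fin n) => π x = y).Nonempty) :
    PMF.map (fun p : Equiv.Perm (Fin n) × Fin n => Equiv.swap y p.2 * p.1)
      (PMF.uniformOfFinset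
        ((Finset.univ.filter fun π : Equiv.Perm (Fin n) => π x = y) ×ˢ Finset.univ)
        (hS.product ⟨x, Finset.mem_univ x⟩))
    = PMF.uniformOfFinset Finset.univ ⟨1, Finset.mem_univ 1⟩ := by
  apply PMF.map_uniformOfFinset_of_bijOn
  simpa using Perm.bijOn_swap_mul x y
end

section
/- Let y1, y2 ∈ [n] with y1 ≠ y2. Then the set of products {(y2 z2)(y1 z1) : z1 ∈ [n] \ {y2}, z2 ∈ [n]} equals the set {(y1 z1')(y2 z2') : z1' ∈ [n], z2' ∈ [n] \ {y1}}, and each set has exactly n(n−1) distinct elements (each pair (z1, z2) in the given ranges yields a distinct permutation). -/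
/-!
Evaluating at `b` shows `(swap b y * swap a x) b = y` whenever `a ≠ b` and `x ≠ b`, so `y` and
then `x` are recovered from the product; this gives injectivity and hence the count.
For the equality of the two sets, conjugating `swap b y` by `swap a x` moves the transposition
through: `swap b y * swap a x = swap a x * swap b (swap a x y)`. This has the required shape unless
`swap a x y = a`, i.e. `y = x`, and then the 3-cycle `swap b x * swap a x` is instead written as
`swap a b * swap b (swap a b x)`. The reverse inclusion is the same statement with `a`, `b`
exchanged.
-/

namespace Equiv

variable {α : Type*} [DecidableEq α] {a b x y : α}

theorem swap_mul_swap_eq_swap_mul_swap_apply (hba : b ≠ a) (hbx : b ≠ x) (y : α) :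
    swap b y * swap a x = swap a x * swap b (swap a x y) := by
  rw [mul_swap_eq_swap_mul (swap a x), swap_apply_of_ne_of_ne hba hbx, swap_apply_self]

theorem swap_mul_swap_self_eq_swap_mul_swap (hab : a ≠ b) (hxb : x ≠ b) :
    swap b x * swap a x = swap a b * swap b (swap a b x) := by
  rw [mul_swap_eq_swap_mul (swap a b), swap_apply_right, swap_apply_self, swap_mul_eq_mul_swap,
    swap_inv, swap_apply_right, swap_apply_of_ne_of_ne hab.symm hxb.symm, swap_comm b a]

theorem exists_swap_mul_swap_eq_swap_mul_swap (hab : a ≠ b) (hxb : x ≠ b) (y : α) :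
    ∃ x' y', y' ≠ a ∧ swap b y * swap a x = swap a x' * swap b y' := by
  by_cases hxy : x = y
  · subst hxy
    refine ⟨b, swap a b x, ?_, swap_mul_swap_self_eq_swap_mul_swap hab hxb⟩
    rwa [Ne, swap_apply_eq_iff, swap_apply_left]
  · refine ⟨x, swap a x y, ?_, swap_mul_swap_eq_swap_mul_swap_apply hab.symm hxb.symm y⟩
    rwa [Ne, swap_apply_eq_iff, swap_apply_left, eq_comm]

theorem swap_mul_swap_apply_of_ne (hab : a ≠ b) (hxb : x ≠ b) (y : α) :
    (swap b y * swap a x) b = y := by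
  rw [Perm.mul_apply, swap_apply_of_ne_of_ne hab.symm hxb.symm, swap_apply_left]

theorem swap_mul_swap_inj {x' y' : α} (hab : a ≠ b) (hxb : x ≠ b) (hx'b : x' ≠ b) :
    swap b y * swap a x = swap b y' * swap a x' ↔ x = x' ∧ y = y' := by
  refine ⟨fun h => ?_, fun ⟨hx, hy⟩ => hx ▸ hy ▸ rfl⟩
  have hy : y = y' := by
    rw [← swap_mul_swap_apply_of_ne hab hxb y, h, swap_mul_swap_apply_of_ne hab hx'b]
  subst hy
  have hx := congrArg (· a) (mul_left_cancel h)
  exact ⟨by simpa only [swap_apply_left] using hx, rfl⟩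

theorem image_swap_mul_swap_eq [Fintype α] (hab : a ≠ b) :
    ((Finset.univ.filter (· ≠ b)) ×ˢ Finset.univ).image
        (fun p : α × α => swap b p.2 * swap a p.1)
      = (Finset.univ ×ˢ (Finset.univ.filter (· ≠ a))).image
        (fun p : α × α => swap a p.1 * swap b p.2) := by
  ext σ
  simp only [Finset.mem_image, Finset.mem_product, Finset.mem_filter, Finset.mem_univ,
    true_and, and_true, Prod.exists]
  constructor
  · rintro ⟨x, y, hx, rfl⟩
    obtain ⟨x', y', hy', he⟩ := exists_swap_mul_swap_eq_swap_mul_swap hab hx y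
    exact ⟨x', y', hy', he.symm⟩
  · rintro ⟨x, y, hy, rfl⟩
    obtain ⟨y', x', hx', he⟩ := exists_swap_mul_swap_eq_swap_mul_swap hab.symm hy x
    exact ⟨x', y', hx', he.symm⟩

end Equiv

open Equiv

/-- For y1 ≠ y2: {(y2 z2)(y1 z1) : z1 ≠ y2, z2 ∈ [n]} = {(y1 z1')(y2 z2') :
z1' ∈ [n], z2' ≠ y1}, each set has n(n−1) elements, and each parameter pair
in the given ranges yields a distinct permutation. -/
theorem stmt5 (n : ℕ) (y1 y2 : Fin n) (h : y1 ≠ y2) :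
    ((Finset.univ.filter (· ≠ y2)) ×ˢ (Finset.univ : Finset (Fin n))).image
        (fun p : Fin n × Fin n => Equiv.swap y2 p.2 * Equiv.swap y1 p.1)
      = ((Finset.univ : Finset (Fin n)) ×ˢ (Finset.univ.filter (· ≠ y1))).image
        (fun p : Fin n × Fin n => Equiv.swap y1 p.1 * Equiv.swap y2 p.2)
    ∧ (((Finset.univ.filter (· ≠ y2)) ×ˢ (Finset.univ : Finset (Fin n))).image
        (fun p : Fin n × Fin n => Equiv.swap y2 p.2 * Equiv.swap y1 p.1)).card
      = n * (n - 1)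
    ∧ Set.InjOn (fun p : Fin n × Fin n => Equiv.swap y2 p.2 * Equiv.swap y1 p.1)
        ↑((Finset.univ.filter (· ≠ y2)) ×ˢ (Finset.univ : Finset (Fin n)))
    ∧ Set.InjOn (fun p : Fin n × Fin n => Equiv.swap y1 p.1 * Equiv.swap y2 p.2)
        ↑((Finset.univ : Finset (Fin n)) ×ˢ (Finset.univ.filter (· ≠ y1))) := by
  have hinj₁ : Set.InjOn (fun p : Fin n × Fin n => swap y2 p.2 * swap y1 p.1)
      ↑((Finset.univ.filter (· ≠ y2)) ×ˢ (Finset.univ : Finset (Fin n))) := by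
    rintro ⟨x, y⟩ hxy ⟨x', y'⟩ hxy' he
    simp only [Finset.coe_product, Finset.coe_filter, Set.mem_prod] at hxy hxy'
    obtain ⟨rfl, rfl⟩ := (swap_mul_swap_inj h (by simpa using hxy.1) (by simpa using hxy'.1)).1 he
    rfl
  have hinj₂ : Set.InjOn (fun p : Fin n × Fin n => swap y1 p.1 * swap y2 p.2)
      ↑((Finset.univ : Finset (Fin n)) ×ˢ (Finset.univ.filter (· ≠ y1))) := by
    rintro ⟨x, y⟩ hxy ⟨x', y'⟩ hxy' he
    simp only [Finset.coe_product, Finset.coe_filter, Set.mem_prod] at hxy hxy'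
    obtain ⟨rfl, rfl⟩ :=
      (swap_mul_swap_inj h.symm (by simpa using hxy.2) (by simpa using hxy'.2)).1 he
    rfl
  refine ⟨image_swap_mul_swap_eq h, ?_, hinj₁, hinj₂⟩
  rw [Finset.card_image_of_injOn hinj₁, Finset.card_product, Finset.filter_ne',
    Finset.card_erase_of_mem (Finset.mem_univ _), Finset.card_univ, Fintype.card_fin,
    Nat.mul_comm]
end

section
/- Let y1, y2 ∈ [n] with y1 ≠ y2. If z1 is uniform on [n] \ {y2} and z2 is uniform on [n], independently, and if z1' is uniform on [n] and z2' is uniform on [n] \ {y1}, independently, then the random permutations (y2 z2)(y1 z1) and (y1 z1')(y2 z2') have the same distribution. -/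
/-!
For `z1 ≠ y2` one has `(y2 z2)(y1 z1) = (y1 z1')(y2 z2')` with `z1' = (y2 z2) z1` and
`z2' = (y1 z1') z2`: conjugation by `(y2 z2)` when `z2 ≠ y1`, an identity of 3-cycles otherwise.
The map `(z1, z2) ↦ (z1', z2')` is a bijection of pairs (each coordinate is recovered by undoing
one transposition), and it sends `z1 = y2` exactly to `z2' = y1`. So it
carries the uniform law on `([n] \ {y2}) × [n]` to the uniform law on `[n] × ([n] \ {y1})`,
along which the two random products agree.
-/

open Equiv

namespace PMF

theorem map_congr_of_eqOn_support {α β : Type*} (p : PMF α) {f g : α → β}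
    (hfg : ∀ a ∈ p.support, f a = g a) : p.map f = p.map g := by
  ext b
  rw [map_apply, map_apply]
  refine tsum_congr fun a => ?_
  by_cases hp : p a = 0
  · simp [hp]
  · rw [hfg a hp]

theorem map_equiv_uniformOfFinset {α β : Type*} (e : α ≃ β) {s : Finset α} {t : Finset β}
    (hs : s.Nonempty) (ht : t.Nonempty) (hst : s.map e.toEmbedding = t) :
    (uniformOfFinset s hs).map e = uniformOfFinset t ht := by
  classical
  subst hst
  ext b
  rw [map_apply, tsum_eq_single (e.symm b) fun a ha => if_neg fun hb => ha (by simp [hb])]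
  simp [uniformOfFinset_apply, Finset.mem_map_equiv]

end PMF

namespace Equiv

variable {α : Type*} [DecidableEq α]

def reorderSwaps (y1 y2 : α) : α × α ≃ α × α where
  toFun p := (swap y2 p.2 p.1, swap y1 (swap y2 p.2 p.1) p.2)
  invFun q := (swap y2 (swap y1 q.1 q.2) q.1, swap y1 q.1 q.2)
  left_inv p := by simp [swap_apply_self]
  right_inv q := by simp [swap_apply_self]

theorem reorderSwaps_snd_eq_left_iff (y1 y2 : α) (p : α × α) :
    (reorderSwaps y1 y2 p).2 = y1 ↔ p.1 = y2 := by
  change swap y1 _ p.2 = y1 ↔ _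
  rw [swap_apply_eq_iff, swap_apply_left, eq_comm, swap_apply_eq_iff, swap_apply_right]

theorem swap_mul_swap_eq_reorderSwaps {y1 y2 : α} (h : y1 ≠ y2) {p : α × α} (hp : p.1 ≠ y2) :
    swap y2 p.2 * swap y1 p.1 =
      swap y1 (reorderSwaps y1 y2 p).1 * swap y2 (reorderSwaps y1 y2 p).2 := by
  obtain ⟨z1, z2⟩ := p
  change swap y2 z2 * swap y1 z1 =
    swap y1 (swap y2 z2 z1) * swap y2 (swap y1 (swap y2 z2 z1) z2)
  rcases eq_or_ne y1 z2 with rfl | h2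
  · rcases eq_or_ne z1 y1 with rfl | h3
    · simp [swap_comm]
    · rw [swap_apply_of_ne_of_ne hp h3, swap_apply_left, mul_swap_eq_swap_mul (swap y1 z1) y2 z1,
        swap_apply_of_ne_of_ne h.symm hp.symm, swap_apply_right]
  · have hz2 : swap y1 (swap y2 z2 z1) z2 = z2 := by
      refine swap_apply_of_ne_of_ne h2.symm fun hc => hp ?_
      rwa [eq_comm, swap_apply_eq_iff, swap_apply_right] at hc
    rw [hz2, mul_swap_eq_swap_mul (swap y2 z2) y1 z1, swap_apply_of_ne_of_ne h h2]

end Equiv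

/-- For y1 ≠ y2: with z1 uniform on [n] \ {y2}, z2 uniform on [n] (independent),
and z1' uniform on [n], z2' uniform on [n] \ {y1} (independent), the random
permutations (y2 z2)(y1 z1) and (y1 z1')(y2 z2') have the same distribution. -/
theorem stmt6 (n : ℕ) (y1 y2 : Fin n) (h : y1 ≠ y2) :
    PMF.map (fun p : Fin n × Fin n => Equiv.swap y2 p.2 * Equiv.swap y1 p.1)
      (PMF.uniformOfFinset ((Finset.univ.filter (· ≠ y2)) ×ˢ Finset.univ)
        (Finset.Nonempty.product ⟨y1, by simp [h]⟩ ⟨y1, Finset.mem_univ y1⟩))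
    = PMF.map (fun p : Fin n × Fin n => Equiv.swap y1 p.1 * Equiv.swap y2 p.2)
      (PMF.uniformOfFinset (Finset.univ ×ˢ (Finset.univ.filter (· ≠ y1)))
        (Finset.Nonempty.product ⟨y2, Finset.mem_univ y2⟩ ⟨y2, by simp [h.symm]⟩)) := by
  have hsupp : ((Finset.univ.filter (· ≠ y2)) ×ˢ Finset.univ).map (reorderSwaps y1 y2).toEmbedding
      = Finset.univ ×ˢ (Finset.univ.filter (· ≠ y1)) := by
    ext q
    rw [Finset.mem_map_equiv]
    simpa [not_iff_not] using (reorderSwaps_snd_eq_left_iff y1 y2 ((reorderSwaps y1 y2).symm q)).symm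
  rw [PMF.map_congr_of_eqOn_support _
      (g := (fun q : Fin n × Fin n => swap y1 q.1 * swap y2 q.2) ∘ reorderSwaps y1 y2)
      fun p hp => swap_mul_swap_eq_reorderSwaps h ?_,
    ← PMF.map_comp, PMF.map_equiv_uniformOfFinset _ _ _ hsupp]
  rw [PMF.mem_support_uniformOfFinset_iff] at hp
  exact (Finset.mem_filter.1 (Finset.mem_product.1 hp).1).2
end

section
/- Let x1, ..., xk be distinct elements of [n], and define T({x1,...,xk}) = { (xk zk)···(x1 z1) : z_i ∈ [n] \ {x_i, ..., x_k} for each i }. Then the set T({x1,...,xk}) is invariant under permuting the order of x1, ..., xk. -/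
/-!
Read the product from the right: `T(x₁, …, x_k) = T(x₂, …, x_k) · {(x₁ z) : z ∉ {x₁, …, x_k}}`.
Since adjacent transpositions generate the symmetric group, it suffices to swap the two
rightmost letters `x₁ = b`, `x₂ = a`, which comes down to rewriting a product
`(a u)(b v)` with `v ∉ {a, b}` as `(b v')(a u')` with `u' ∉ {a, b}`, choosing
`u', v' ∈ {u, v, a}` so that the forbidden sets are respected.
-/

open Equiv Pointwise

variable {α : Type*} [DecidableEq α]

def swapProducts : List α → Set (Perm α)
  | [] => {1}
  | a :: l => swapProducts l * swap a '' {z | z ∉ a :: l}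

theorem swap_mul_swap_reorder {a b u v : α} (hab : a ≠ b) (hua : u ≠ a) (hva : v ≠ a)
    (hvb : v ≠ b) :
    swap a u * swap b v = swap b (if u = v then a else v) * swap a (if u = b then v else u) := by
  ext w
  simp only [Perm.mul_apply, swap_apply_def]
  split_ifs <;> grind

theorem swapProducts_swap_subset {a b : α} {l : List α} (hab : a ≠ b) (ha : a ∉ l) :
    swapProducts (b :: a :: l) ⊆ swapProducts (a :: b :: l) := by
  simp only [swapProducts, mul_assoc]
  refine Set.mul_subset_mul_left ?_
  rintro _ ⟨_, ⟨u, hu, rfl⟩, _, ⟨v, hv, rfl⟩, rfl⟩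
  simp only [Set.mem_ofPred_eq, List.mem_cons, not_or] at hu hv
  show swap a u * swap b v ∈ _
  rw [swap_mul_swap_reorder hab hu.1 hv.2.1 hv.1]
  refine Set.mul_mem_mul ⟨_, ?_, rfl⟩ ⟨_, ?_, rfl⟩ <;>
    simp only [Set.mem_ofPred_eq, List.mem_cons, not_or] <;> split_ifs <;> grind

theorem swapProducts_subset_of_perm {l₁ l₂ : List α} (h : l₁.Perm l₂) (hnd : l₁.Nodup) :
    swapProducts l₁ ⊆ swapProducts l₂ := by
  induction h with
  | nil => rfl
  | cons a h ih =>
    have hmem : {z | z ∉ a :: _} = {z | z ∉ a :: _} := Set.ext fun z => (h.cons a).mem_iff.not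
    rw [swapProducts, swapProducts, hmem]
    exact Set.mul_subset_mul_right (ih hnd.of_cons)
  | swap a b l =>
    simp only [List.nodup_cons, List.mem_cons, not_or] at hnd
    exact swapProducts_swap_subset (Ne.symm hnd.1.1) hnd.2.1
  | trans h₁ _ ih₁ ih₂ => exact (ih₁ hnd).trans (ih₂ (h₁.nodup_iff.mp hnd))

theorem swapProducts_eq_of_perm {l₁ l₂ : List α} (h : l₁.Perm l₂) (hnd : l₁.Nodup) :
    swapProducts l₁ = swapProducts l₂ :=
  (swapProducts_subset_of_perm h hnd).antisymm
    (swapProducts_subset_of_perm h.symm (h.nodup_iff.mp hnd))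

theorem swapProducts_ofFn {k : ℕ} (x : Fin k → α) :
    swapProducts (List.ofFn x) = {σ | ∃ z : Fin k → α, (∀ i j : Fin k, i ≤ j → z i ≠ x j) ∧
      σ = ((List.ofFn fun i => swap (x i) (z i)).reverse).prod} := by
  induction k with
  | zero => ext σ; simp [swapProducts, eq_comm]
  | succ k ih =>
    ext σ
    rw [List.ofFn_succ, swapProducts, ih]
    simp only [Set.mem_mul, Set.mem_ofPred_eq, Set.mem_image, List.mem_cons, List.mem_ofFn,
      List.ofFn_succ, List.reverse_cons, List.prod_append, List.prod_singleton, not_or,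
      not_exists]
    constructor
    · rintro ⟨_, ⟨z, hz, rfl⟩, _, ⟨z₀, ⟨hz₀, hz₀'⟩, rfl⟩, rfl⟩
      refine ⟨Fin.cons z₀ z, fun i j hij => ?_, by simp⟩
      cases i using Fin.cases with
      | zero => cases j using Fin.cases <;> simp [hz₀, fun j => Ne.symm (hz₀' j)]
      | succ i =>
        cases j using Fin.cases with
        | zero => exact absurd hij (by simp)
        | succ j => simpa using hz i j (by simpa using hij)
    · rintro ⟨z, hz, rfl⟩
      refine ⟨_, ⟨fun i => z i.succ, fun i j hij => hz _ _ (by simpa using hij), rfl⟩, _,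
        ⟨z 0, ⟨hz 0 0 le_rfl, fun j => (hz 0 j.succ (Fin.zero_le _)).symm⟩, rfl⟩, rfl⟩

/-- The set T({x1,...,xk}) = { (xk zk)···(x1 z1) : z_i ∉ {x_i,...,x_k} } is
invariant under permuting the order of the distinct elements x1, ..., xk. -/
theorem stmt8 (n k : ℕ) (x : Fin k → Fin n) (hx : Function.Injective x)
    (ρ : Equiv.Perm (Fin k)) :
    {σ : Equiv.Perm (Fin n) | ∃ z : Fin k → Fin n,
        (∀ i j : Fin k, i ≤ j → z i ≠ x j) ∧
        σ = ((List.ofFn fun i => Equiv.swap (x i) (z i)).reverse).prod}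
    = {σ : Equiv.Perm (Fin n) | ∃ z : Fin k → Fin n,
        (∀ i j : Fin k, i ≤ j → z i ≠ x (ρ j)) ∧
        σ = ((List.ofFn fun i => Equiv.swap (x (ρ i)) (z i)).reverse).prod} := by
  rw [← swapProducts_ofFn x, ← swapProducts_ofFn fun i => x (ρ i)]
  exact swapProducts_eq_of_perm (ρ.ofFn_comp_perm x).symm (List.nodup_ofFn.mpr hx)
end

section
/- Let x1, ..., xk be distinct elements of [n]. For any σ ∈ T({x1,...,xk}) there is exactly one tuple (z1,...,zk) with z_i ∈ [n] \ {x_i,...,x_k} such that σ = (xk zk)···(x1 z1). -/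
open Equiv

namespace Equiv.Perm

variable {α : Type*}

theorem list_prod_apply_eq_self {l : List (Perm α)} {a : α} (h : ∀ p ∈ l, p a = a) :
    l.prod a = a :=
  (MulAction.stabilizer (Perm α) a).list_prod_mem h

variable [DecidableEq α]

/-- The product `(x (k-1) z (k-1)) ⋯ (x 0 z 0)`: the transposition with index `0` acts first. -/
def swapProd {k : ℕ} (x z : Fin k → α) : Perm α :=
  ((List.ofFn fun i => swap (x i) (z i)).reverse).prod

theorem swapProd_succ {k : ℕ} (x z : Fin (k + 1) → α) :
    swapProd x z = swap (x (Fin.last k)) (z (Fin.last k)) * swapProd (Fin.init x) (Fin.init z) := by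
  rw [swapProd, List.ofFn_succ', List.concat_eq_append, List.reverse_append,
    List.reverse_singleton, List.singleton_append, List.prod_cons]
  rfl

theorem swapProd_apply_of_forall_ne {k : ℕ} {x z : Fin k → α} {a : α}
    (hx : ∀ i, x i ≠ a) (hz : ∀ i, z i ≠ a) : swapProd x z a = a := by
  refine list_prod_apply_eq_self fun p hp => ?_
  obtain ⟨i, rfl⟩ := List.mem_ofFn.mp (List.mem_reverse.mp hp)
  exact swap_apply_of_ne_of_ne (hx i).symm (hz i).symm

/-- The last letter `x (k-1)` is untouched by all earlier transpositions, so the whole product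
sends it to `z (k-1)`. -/
theorem swapProd_apply_last {k : ℕ} {x z : Fin (k + 1) → α} (hx : Function.Injective x)
    (hz : ∀ i j, i ≤ j → z i ≠ x j) : swapProd x z (x (Fin.last k)) = z (Fin.last k) := by
  have hfix : swapProd (Fin.init x) (Fin.init z) (x (Fin.last k)) = x (Fin.last k) :=
    swapProd_apply_of_forall_ne (fun i => hx.ne (Fin.castSucc_lt_last i).ne)
      (fun i => hz _ _ (Fin.le_last _))
  rw [swapProd_succ, Perm.mul_apply, hfix, swap_apply_left]

theorem swapProd_inj {k : ℕ} {x z z' : Fin k → α} (hx : Function.Injective x)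
    (hz : ∀ i j, i ≤ j → z i ≠ x j) (hz' : ∀ i j, i ≤ j → z' i ≠ x j)
    (h : swapProd x z = swapProd x z') : z = z' := by
  induction k with
  | zero => exact Subsingleton.elim z z'
  | succ k ih =>
    have hlast : z (Fin.last k) = z' (Fin.last k) := by
      rw [← swapProd_apply_last hx hz, ← swapProd_apply_last hx hz', h]
    have hinit : Fin.init z = Fin.init z' := by
      refine ih (hx.comp (Fin.castSucc_injective k))
        (fun i j hij => hz _ _ (Fin.castSucc_le_castSucc_iff.mpr hij))
        (fun i j hij => hz' _ _ (Fin.castSucc_le_castSucc_iff.mpr hij)) ?_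
      rw [swapProd_succ, swapProd_succ, hlast] at h
      exact mul_left_cancel h
    rw [← Fin.snoc_init_self z, ← Fin.snoc_init_self z', hinit, hlast]

end Equiv.Perm

/-- For any σ ∈ T({x1,...,xk}) there is exactly one tuple (z1,...,zk) with
z_i ∉ {x_i,...,x_k} such that σ = (xk zk)···(x1 z1). -/
theorem stmt9 (n k : ℕ) (x : Fin k → Fin n) (hx : Function.Injective x)
    (σ : Equiv.Perm (Fin n))
    (hσ : ∃ z : Fin k → Fin n, (∀ i j : Fin k, i ≤ j → z i ≠ x j) ∧
      σ = ((List.ofFn fun i => Equiv.swap (x i) (z i)).reverse).prod) :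
    ∃! z : Fin k → Fin n, (∀ i j : Fin k, i ≤ j → z i ≠ x j) ∧
      σ = ((List.ofFn fun i => Equiv.swap (x i) (z i)).reverse).prod := by
  obtain ⟨z, hz, rfl⟩ := hσ
  exact ⟨z, ⟨hz, rfl⟩, fun z' ⟨hz', h⟩ => Perm.swapProd_inj hx hz' hz h.symm⟩
end

section
/- Let x1, ..., xk be distinct elements of [n]. Then |T({x1,...,xk})| = (n−1)!/(n−k−1)!. -/
/-!
Write `σ(z) = (x_k z_k) ⋯ (x_1 z_1)` and call `z` admissible if `z_i ∉ {x_i, …, x_k}`.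
For admissible `z` the factors `(x_i z_i)` with `i < k` all fix `x_k`, so `σ(z) x_k = z_k`;
cancelling the last factor and inducting shows that `σ` is injective on admissible sequences.
There are `n - (k - i + 1)` choices for each `z_i`, and their product is `(n-1)!/(n-k-1)!`.
-/

open Equiv

variable {α : Type*} {k : ℕ}

def admissible (x : Fin k → α) : Set (Fin k → α) :=
  {z | ∀ i j, i ≤ j → z i ≠ x j}

lemma init_mem_admissible {x z : Fin (k + 1) → α} (hz : z ∈ admissible x) :
    Fin.init z ∈ admissible (Fin.init x) :=
  fun i j hij => hz i.castSucc j.castSucc (Fin.castSucc_le_castSucc_iff.mpr hij)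

lemma ncard_admissible [Fintype α] {x : Fin k → α} (hx : Function.Injective x) :
    (admissible x).ncard = ∏ i : Fin k, (Fintype.card α - (k - i)) := by
  classical
  have : admissible x = Fintype.piFinset fun i => Finset.univ \ (Finset.Ici i).image x := by
    ext z
    simp [admissible, eq_comm]
  rw [this, Set.ncard_coe_finset, Fintype.card_piFinset]
  refine Finset.prod_congr rfl fun i _ => ?_
  rw [Finset.card_sdiff_of_subset (Finset.subset_univ _), Finset.card_univ,
    Finset.card_image_of_injective _ hx, Fin.card_Ici]

variable [DecidableEq α]

def swapProd (x z : Fin k → α) : Perm α :=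
  (List.ofFn fun i => swap (x i) (z i)).reverse.prod

lemma swapProd_succ (x z : Fin (k + 1) → α) :
    swapProd x z =
      swap (x (Fin.last k)) (z (Fin.last k)) * swapProd (Fin.init x) (Fin.init z) := by
  rw [swapProd, swapProd, List.ofFn_succ']
  simp [Fin.init]

lemma swapProd_apply_of_ne {x z : Fin k → α} {a : α} (hx : ∀ i, x i ≠ a)
    (hz : ∀ i, z i ≠ a) : swapProd x z a = a := by
  have : swapProd x z ∈ MulAction.stabilizer (Perm α) a :=
    (MulAction.stabilizer (Perm α) a).list_prod_mem fun σ hσ => by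
      simp only [List.mem_reverse, List.mem_ofFn] at hσ
      obtain ⟨i, rfl⟩ := hσ
      simp only [MulAction.mem_stabilizer_iff, Perm.smul_def]
      exact swap_apply_of_ne_of_ne (hx i).symm (hz i).symm
  simpa using this

lemma swapProd_apply_last {x z : Fin (k + 1) → α} (hx : Function.Injective x)
    (hz : z ∈ admissible x) : swapProd x z (x (Fin.last k)) = z (Fin.last k) := by
  rw [swapProd_succ, Perm.mul_apply, swapProd_apply_of_ne, swap_apply_left]
  · exact fun i => hx.ne (Fin.castSucc_lt_last i).ne
  · exact fun i => hz i.castSucc _ (Fin.castSucc_lt_last i).le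

lemma swapProd_injOn {x : Fin k → α} (hx : Function.Injective x) :
    Set.InjOn (swapProd x) (admissible x) := by
  induction k with
  | zero => exact fun z _ z' _ _ => Subsingleton.elim z z'
  | succ k ih =>
    intro z hz z' hz' h
    have hlast : z (Fin.last k) = z' (Fin.last k) := by
      rw [← swapProd_apply_last hx hz, ← swapProd_apply_last hx hz', h]
    have hinit : Fin.init z = Fin.init z' := by
      refine ih (hx.comp (Fin.castSucc_injective k)) (init_mem_admissible hz)
        (init_mem_admissible hz') ?_
      rw [swapProd_succ, swapProd_succ, hlast] at h
      exact mul_left_cancel h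
    rw [← Fin.snoc_init_self z, ← Fin.snoc_init_self z', hinit, hlast]

lemma prod_sub_sub_eq_descFactorial (n : ℕ) :
    ∏ i : Fin k, (n - (k - i)) = (n - 1).descFactorial k := by
  rw [Nat.descFactorial_eq_prod_range, ← Fin.prod_univ_eq_prod_range]
  refine Fintype.prod_equiv Fin.revPerm _ _ fun i => ?_
  simp only [Fin.revPerm_apply, Fin.val_rev]
  omega

/-- |T({x1,...,xk})| = (n−1)!/(n−k−1)!, for distinct x1,...,xk with k ≤ n−1. -/
theorem stmt10 (n k : ℕ) (hk : k ≤ n - 1) (x : Fin k → Fin n)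
    (hx : Function.Injective x) :
    Set.ncard {σ : Equiv.Perm (Fin n) | ∃ z : Fin k → Fin n,
        (∀ i j : Fin k, i ≤ j → z i ≠ x j) ∧
        σ = ((List.ofFn fun i => Equiv.swap (x i) (z i)).reverse).prod}
      = (n - 1).factorial / (n - k - 1).factorial := by
  have himage : {σ : Equiv.Perm (Fin n) | ∃ z : Fin k → Fin n,
      (∀ i j : Fin k, i ≤ j → z i ≠ x j) ∧
      σ = ((List.ofFn fun i => Equiv.swap (x i) (z i)).reverse).prod} =
      swapProd x '' admissible x := by
    ext σ
    exact exists_congr fun z => and_congr Iff.rfl eq_comm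
  rw [himage, (swapProd_injOn hx).ncard_image, ncard_admissible hx,
    Fintype.card_fin, prod_sub_sub_eq_descFactorial, Nat.descFactorial_eq_div hk,
    Nat.sub_right_comm]
end

section
/- Let x1, ..., x_{k} be distinct elements of [n] with k ≤ n−1, and let π be an n-cycle permutation with π(x_i) = x_{i+1} for i < k. Let λ = (x_k ... x_1) and let σ = (x_{k-1} z_{k-1})···(x_1 z_1) with z_i ∈ [n] \ {x_i,...,x_{k-1}}. Then σ ∘ λ ∘ π is again a single n-cycle on [n]. -/
/-!
Left multiplication by `swap b (g b)` splits the point `b` off a cycle `g`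
(`Equiv.Perm.IsCycle.swap_mul`); conversely, left multiplication by `swap b a`, with `b` fixed
and `a` moved, joins `b` into the cycle. Since `λ = (x_k x_{k-1}) ⋯ (x_2 x_1)` and `π` maps
`x_i` to `x_{i+1}`, the factors of `λ` split `x_1, …, x_{k-1}` off `π` one at a time; at the
last step this needs `π x_k ≠ x_1`, which holds because `π` is an `n`-cycle and `k < n`. The
factors `(x_i z_i)` of `σ` then join `x_1, …, x_{k-1}` back in turn: when `(x_i z_i)` acts,
`x_i` is still fixed while `z_i ∉ {x_i, …, x_{k-1}}` is already moved.
-/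

open Equiv Equiv.Perm List Function Finset

theorem Fin.val_sub_one_add_one_mod {k : ℕ} [NeZero k] (i : Fin k) :
    ((i - 1 : Fin k) + 1 : ℕ) % k = i := by
  conv_rhs => rw [← sub_add_cancel i 1]
  rw [Fin.val_add, Fin.val_one', Nat.add_mod_mod]

namespace Equiv.Perm

variable {α : Type*} {f : Perm α}

theorem eq_pow_apply_of_path {k : ℕ} {x : Fin k → α}
    (hpath : ∀ i j : Fin k, (j : ℕ) = i + 1 → f (x i) = x j) (i : Fin k) :
    x i = (f ^ (i : ℕ)) (x ⟨0, i.pos⟩) := by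
  obtain ⟨i, hi⟩ := i
  induction i with
  | zero => rfl
  | succ i ih =>
    rw [pow_succ', mul_apply, ← ih (by omega), hpath ⟨i, by omega⟩ ⟨i + 1, hi⟩ rfl]

variable [DecidableEq α]

theorem IsCycle.apply_ne_of_path [Fintype α] (hf : f.IsCycle) {k : ℕ} {x : Fin k → α}
    (hpath : ∀ i j : Fin k, (j : ℕ) = i + 1 → f (x i) = x j)
    (hsupp : ∀ i, x i ∈ f.support) (hk : k < #f.support) {i j : Fin k} (hji : j ≤ i) :
    f (x i) ≠ x j := by
  have hon : f.IsCycleOn (f.support : Set α) := by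
    rw [coe_support_eq_set_support]; exact hf.isCycleOn
  rw [eq_pow_apply_of_path hpath i, eq_pow_apply_of_path hpath j, ← mul_apply, ← pow_succ',
    Ne, hon.pow_apply_eq_pow_apply (hsupp _)]
  intro h
  have := h.eq_of_lt_of_lt (by omega) (by omega)
  rw [Fin.le_def] at hji
  omega

theorem eq_formPerm_reverse_map_finRange {k : ℕ} [NeZero k] {x : Fin k → α} (hx : Injective x)
    {g : Perm α} (hxg : ∀ i, g (x i) = x (i - 1)) (hg : ∀ y ∉ Set.range x, g y = y) :
    g = formPerm ((finRange k).map x).reverse := by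
  have hnd : ((finRange k).map x).Nodup := (nodup_finRange k).map hx
  rw [formPerm_reverse]
  refine eq_inv_of_mul_eq_one_right (Equiv.ext fun y => ?_)
  by_cases hy : y ∈ Set.range x
  · obtain ⟨i, rfl⟩ := hy
    have := formPerm_apply_getElem _ hnd ((i - 1 : Fin k) : ℕ) (by simp)
    simp only [getElem_map, getElem_finRange, length_map, length_finRange] at this
    simpa [hxg, Fin.val_sub_one_add_one_mod] using this
  · have hy' : y ∉ (finRange k).map x := by simpa using hy
    simp [hg y hy, formPerm_apply_of_notMem hy']

/- The path is listed backwards, `f y = x` for consecutive `x, y`, so that `formPerm l` is the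
paper's `λ = (x_k ⋯ x_1)` for `l = [x_k, …, x_1]`. -/
theorem IsCycle.formPerm_mul [Fintype α] (hf : f.IsCycle) {l : List α} (hnd : l.Nodup)
    (hchain : l.IsChain fun u v => f v = u) (hhead : ∀ a ∈ l.head?, f a ∉ l.tail) :
    (formPerm l * f).IsCycle ∧ (formPerm l * f).support = f.support \ l.tail.toFinset := by
  induction l with
  | nil => simpa using hf
  | cons a t ih =>
    cases t with
    | nil => simpa using hf
    | cons b r =>
      have hfb : f b = a := (isChain_cons_cons.1 hchain).1
      have ha : a ∉ b :: r := (nodup_cons.1 hnd).1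
      have hfa : f a ∉ b :: r := hhead a rfl
      obtain ⟨hg, hgs⟩ := ih hnd.of_cons hchain.tail
        (by simpa [hfb] using fun h => ha (mem_cons_of_mem b h))
      set g := formPerm (b :: r) * f
      have hgb : g b = a := by simp [g, mul_apply, hfb, formPerm_apply_of_notMem ha]
      have hggb : g (g b) ≠ b := by
        rw [hgb, mul_apply, formPerm_apply_of_notMem hfa]; rintro h; simp [h] at hfa
      rw [formPerm_cons_cons, mul_assoc, swap_comm, ← hgb]
      refine ⟨hg.swap_mul (by rw [hgb]; rintro rfl; simp at ha) hggb, ?_⟩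
      rw [support_swap_mul_eq g b hggb, hgs]
      simp only [tail_cons, toFinset_cons, Finset.sdiff_insert, Finset.sdiff_singleton_eq_erase]

theorem IsCycle.formPerm_reverse_map_finRange_mul [Fintype α] (hf : f.IsCycle) {k : ℕ}
    [NeZero k] {x : Fin k → α} (hx : Injective x)
    (hpath : ∀ i j : Fin k, (j : ℕ) = i + 1 → f (x i) = x j)
    (hsupp : ∀ i, x i ∈ f.support) (hk : k < #f.support) :
    (formPerm ((finRange k).map x).reverse * f).IsCycle ∧
      (formPerm ((finRange k).map x).reverse * f).support =
        f.support \ (((finRange k).take (k - 1)).map x).toFinset := by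
  set l := ((finRange k).map x).reverse
  have hk0 := NeZero.pos k
  have hnd : l.Nodup := nodup_reverse.2 ((nodup_finRange k).map hx)
  have hchain : l.IsChain fun u v => f v = u := by
    rw [isChain_reverse, isChain_map, isChain_iff_getElem]
    exact fun i hi => hpath _ _ (by simp)
  have htail : l.tail = (((finRange k).take (k - 1)).map x).reverse := by
    simp [l, dropLast_eq_take]
  have hhead : ∀ a ∈ l.head?, f a ∉ l.tail := by
    intro a ha
    obtain rfl : a = x ⟨k - 1, by omega⟩ := by
      simpa [l, getLast?_eq_getElem?, show k - 1 < k by omega, eq_comm] using ha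
    simp only [htail, mem_reverse, List.mem_map, not_exists, not_and]
    intro j _ h
    exact hf.apply_ne_of_path hpath hsupp hk (Fin.le_def.2 (Nat.le_sub_one_of_lt j.isLt))
      h.symm
  rw [← toFinset_reverse, ← htail]
  exact hf.formPerm_mul hnd hchain hhead

theorem IsCycle.swap_mul_of_apply_eq_self [Finite α] (hf : f.IsCycle) {a b : α}
    (ha : f a ≠ a) (hb : f b = b) : (swap b a * f).IsCycle := by
  have hab : a ≠ b := fun h => ha (h ▸ hb)
  have hmoved : ∀ y, f y ≠ y → f y ≠ b := fun y hy h =>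
    hy (f.injective (h.trans hb.symm) ▸ h)
  -- the new cycle is `b ↦ a ↦ f a ↦ ⋯ ↦ f⁻¹ a ↦ b`
  have horbit : ∀ m : ℕ, SameCycle (swap b a * f) a ((f ^ m) a) := by
    intro m
    induction m with
    | zero => rfl
    | succ m ih =>
      set c := (f ^ m) a
      have hc : f c ≠ c := by simpa [c] using ha
      rw [pow_succ', mul_apply]
      by_cases hca : f c = a
      · rw [hca]
      · have : (swap b a * f) c = f c := by
          rw [mul_apply, swap_apply_of_ne_of_ne (hmoved c hc) hca]
        exact this ▸ ih.apply_right
  refine ⟨b, by simpa [mul_apply, hb] using hab, fun y hy => ?_⟩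
  have hba : SameCycle (swap b a * f) b a := ⟨1, by simp [mul_apply, hb]⟩
  by_cases hyb : y = b
  · exact hyb ▸ SameCycle.refl _ _
  have hfy : f y ≠ y := fun h => hy (by
    rw [mul_apply, h, swap_apply_of_ne_of_ne hyb (by rintro rfl; exact ha h)])
  obtain ⟨m, rfl⟩ := hf.exists_pow_eq ha hfy
  exact hba.trans (horbit m)

theorem support_swap_mul_of_apply_eq_self [Fintype α] {a b : α} (ha : f a ≠ a)
    (hb : f b = b) :
    (swap b a * f).support = insert b f.support := by
  set g := swap b a * f
  have hgb : g b = a := by simp [g, mul_apply, hb]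
  have hfa : f a ≠ b := fun h => ha (f.injective (h.trans hb.symm) ▸ h)
  have hga : g a ≠ b := by simpa [g, mul_apply, swap_apply_of_ne_of_ne hfa ha] using hfa
  have hf : swap b (g b) * g = f := by rw [hgb, swap_mul_self_mul]
  rw [← hf, support_swap_mul_eq g b (hgb ▸ hga), Finset.sdiff_singleton_eq_erase,
    Finset.insert_erase (by rw [mem_support, hgb]; exact fun h => ha (h ▸ hb))]

theorem IsCycle.prod_swap_mul [Fintype α] {ι : Type*} (hf : f.IsCycle) {I : List ι}
    {x z : ι → α} (hfix : ∀ i ∈ I, x i ∉ f.support) (hnd : (I.map x).Nodup)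
    (hcover : ∀ i ∈ I, z i ∈ f.support ∪ (I.map x).toFinset)
    (hne : ∀ i ∈ I, z i ≠ x i) (hpw : I.Pairwise fun i j => z i ≠ x j) :
    ((I.map fun i => swap (x i) (z i)).reverse.prod * f).IsCycle ∧
      ((I.map fun i => swap (x i) (z i)).reverse.prod * f).support =
        f.support ∪ (I.map x).toFinset := by
  induction I generalizing f with
  | nil => simpa using hf
  | cons i I ih =>
    simp only [List.forall_mem_cons, List.map_cons, nodup_cons, List.pairwise_cons,
      toFinset_cons] at hfix hnd hcover hne hpw ⊢
    have hb : f (x i) = x i := notMem_support.1 hfix.1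
    have ha : f (z i) ≠ z i := by
      have := hcover.1
      simp only [Finset.mem_union, Finset.mem_insert, mem_toFinset, List.mem_map] at this
      rcases this with h | h | ⟨j, hj, h⟩
      · exact mem_support.1 h
      · exact absurd h hne.1
      · exact absurd h.symm (hpw.1 j hj)
    have hsupp := support_swap_mul_of_apply_eq_self ha hb
    rw [reverse_cons, prod_append, List.prod_singleton, mul_assoc]
    obtain ⟨hcyc, hsupp'⟩ := ih (hf.swap_mul_of_apply_eq_self ha hb)
      (fun j hj => by
        simpa [hsupp] using
          ⟨fun h => hnd.1 (h ▸ List.mem_map_of_mem hj), notMem_support.1 (hfix.2 j hj)⟩)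
      hnd.2 (fun j hj => by simpa [hsupp, or_comm, or_left_comm] using hcover.2 j hj)
      hne.2 hpw.2
    exact ⟨hcyc, by rw [hsupp', hsupp]; ext; simp⟩

end Equiv.Perm

/-- If π is a single n-cycle with π(x_i) = x_{i+1} for i < k,
λ = (x_k ... x_1), and σ = (x_{k-1} z_{k-1})···(x_1 z_1) with
z_i ∉ {x_i,...,x_{k-1}}, then σ∘λ∘π is again a single n-cycle on [n]. -/
theorem stmt14 (n k : ℕ) [NeZero k] (hk : k ≤ n - 1)
    (x : Fin k → Fin n) (hx : Function.Injective x)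
    (π lam : Equiv.Perm (Fin n))
    (hπc : π.IsCycle) (hπs : π.support = Finset.univ)
    (hπx : ∀ i j : Fin k, (j : ℕ) = (i : ℕ) + 1 → π (x i) = x j)
    (hl1 : ∀ i : Fin k, lam (x i) = x (i - 1))
    (hl2 : ∀ y : Fin n, y ∉ Set.range x → lam y = y)
    (z : Fin k → Fin n)
    (hz : ∀ i j : Fin k, (i : ℕ) < k - 1 → (j : ℕ) < k - 1 → i ≤ j → z i ≠ x j)
    (σ : Equiv.Perm (Fin n))
    (hσ : σ = ((((List.finRange k).take (k - 1)).map
        fun i => Equiv.swap (x i) (z i)).reverse).prod) :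
    (σ * lam * π).IsCycle ∧ (σ * lam * π).support = Finset.univ := by
  set I := (List.finRange k).take (k - 1)
  have hI : ∀ i, i ∈ I ↔ (i : ℕ) < k - 1 := fun i => by
    simp [I, mem_take_iff_getElem, Fin.ext_iff]
  have hkn : k < #π.support := by
    rw [hπs, card_univ, Fintype.card_fin]; have := NeZero.pos k; omega
  obtain ⟨hcyc, hsupp⟩ := hπc.formPerm_reverse_map_finRange_mul hx hπx
    (fun _ => hπs ▸ mem_univ _) hkn
  rw [hπs] at hsupp
  obtain ⟨hcyc', hsupp'⟩ := hcyc.prod_swap_mul (I := I) (z := z)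
    (fun i hi => by
      rw [hsupp, mem_sdiff, not_and, not_not, mem_toFinset]
      exact fun _ => List.mem_map_of_mem hi)
    (((nodup_finRange k).sublist (take_sublist _ _)).map hx)
    (fun i _ => by rw [hsupp, sdiff_union_of_subset (subset_univ _)]; exact mem_univ _)
    (fun i hi => hz i i ((hI i).1 hi) ((hI i).1 hi) le_rfl)
    (((pairwise_lt_finRange k).sublist (take_sublist _ _)).imp_of_mem
      fun hi hj hij => hz _ _ ((hI _).1 hi) ((hI _).1 hj) hij.le)
  rw [hσ, mul_assoc, eq_formPerm_reverse_map_finRange hx hl1 hl2]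
  exact ⟨hcyc', by rw [hsupp', hsupp, sdiff_union_of_subset (subset_univ _)]⟩
end
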